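/- Let φ: ℝ^d → [0,∞] be measurable with φ ≥ a·𝟙_{S_a} where S_a = {x : φ(x) ≥ a} ∪ {0}, and let ζ be a finite configuration of ⌊k⌋ points such that every subset of ζ with pairwise differences outside S_a has at most X elements. Then the pair energy satisfies (1/2) Σ_{x≠y ∈ ζ} φ(x−y) ≥ (a/2) · ⌊k⌋(⌊k⌋ − X)/X. -/

import Mathlib

/-! Call two points of `ζ` adjacent when their difference lies in `S`. The complement of this
graph has no clique of size `X + 1`, so by Turán's theorem it has at most `(1 - 1/X) n² / 2` edges,
where `n = ⌊k⌋`. Hence at least `n (n - X) / X` ordered pairs `(x, y)` of `ζ` have `x - y ∈ S`,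
and each of them contributes at least `a` to the energy. -/

open Finset
open scoped Classical ENNReal

noncomputable section

namespace SimpleGraph

variable {V : Type*} [Fintype V] {G : SimpleGraph V} [DecidableRel G.Adj]

theorem card_sq_le_of_cliqueFree_compl {r : ℕ} (h : Gᶜ.CliqueFree (r + 1)) :
    Fintype.card V ^ 2 ≤ r * (Fintype.card G.Dart + Fintype.card V) := by
  set n := Fintype.card V
  rcases r.eq_zero_or_pos with rfl | hr
  · have : IsEmpty V := cliqueFree_one.mp h
    simp [n]
  obtain ⟨H, _, hH⟩ := exists_isTuranMaximal (V := V) hr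
  have hturan : 2 * r * #Gᶜ.edgeFinset ≤ (r - 1) * n ^ 2 := by
    grw [hH.2 h, ((isTuranMaximal_iff_nonempty_iso_turanGraph hr).mp hH).some.card_edgeFinset_eq]
    exact mul_card_edgeFinset_turanGraph_le
  have hcompl : #G.edgeFinset + #Gᶜ.edgeFinset = n.choose 2 := by
    rw [← card_union_of_disjoint (disjoint_edgeFinset.mpr disjoint_compl_right), ← edgeFinset_sup]
    convert card_edgeFinset_top_eq_card_choose_two (V := V) using 3
    exact sup_compl_eq_top
  have hchoose : 2 * n.choose 2 + n = n ^ 2 := by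
    rw [Nat.choose_two_right, Nat.mul_div_cancel' (Nat.even_mul_pred_self n).two_dvd]
    cases n <;> simp only [Nat.add_sub_cancel, Nat.zero_sub] <;> ring
  rw [dart_card_eq_twice_card_edges]
  obtain ⟨s, rfl⟩ : ∃ s, r = s + 1 := ⟨r - 1, by omega⟩
  rw [Nat.add_sub_cancel] at hturan
  -- `r (2 e(G) + n) = r n² - 2 r e(Gᶜ) ≥ r n² - (r - 1) n²`
  nlinarith

end SimpleGraph

namespace Finset

variable {α : Type*} {R : α → α → Prop} [DecidableRel R]

def fromRelDartEquivOffDiag (hR : ∀ x y, R x y → R y x) (s : Finset α) :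
    (SimpleGraph.fromRel fun x y : s => R x y).Dart ≃ (s.offDiag.filter fun p => R p.1 p.2) where
  toFun d := ⟨(d.fst, d.snd), by
    obtain ⟨hne, h | h⟩ := d.adj <;>
      simp [hne, hR _ _ h, h]⟩
  invFun p :=
    have hp := mem_filter.mp p.2
    have hoff := mem_offDiag.mp hp.1
    ⟨(⟨_, hoff.1⟩, ⟨_, hoff.2.1⟩), fun h => hoff.2.2 (congrArg Subtype.val h), .inl hp.2⟩
  left_inv _ := rfl
  right_inv _ := rfl

theorem sq_card_le_of_indep_card_le (hR : ∀ x y, R x y → R y x) (s : Finset α) (r : ℕ)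
    (hind : ∀ t ⊆ s, (∀ x ∈ t, ∀ y ∈ t, x ≠ y → ¬ R x y) → #t ≤ r) :
    #s ^ 2 ≤ r * (#(s.offDiag.filter fun p => R p.1 p.2) + #s) := by
  have hfree : (SimpleGraph.fromRel fun x y : s => R x y)ᶜ.CliqueFree (r + 1) := by
    intro t ht
    have hsub : t.map (Function.Embedding.subtype _) ⊆ s := fun _ hx => by
      obtain ⟨x, -, rfl⟩ := mem_map.mp hx
      exact x.2
    have hindep := hind _ hsub (by
      simp only [mem_map, Function.Embedding.subtype_apply]
      rintro _ ⟨x, hx, rfl⟩ _ ⟨y, hy, rfl⟩ hxy hRxy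
      have hne := Subtype.coe_ne_coe.mp hxy
      exact (ht.isClique hx hy hne).2 ⟨hne, .inl hRxy⟩)
    simp [ht.card_eq] at hindep
  have := SimpleGraph.card_sq_le_of_cliqueFree_compl hfree
  rwa [Fintype.card_congr (fromRelDartEquivOffDiag hR s), Fintype.card_coe, Fintype.card_coe] at this

end Finset

theorem pair_energy_lower_bound_general {d : ℕ}
    (φ : EuclideanSpace ℝ (Fin d) → ℝ≥0∞)
    (a : ℝ) (ha : 0 < a)
    (S : Set (EuclideanSpace ℝ (Fin d)))
    (hsym : ∀ x : EuclideanSpace ℝ (Fin d), x ∈ S ↔ -x ∈ S)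
    (hφS : ∀ x ∈ S, x ≠ 0 → ENNReal.ofReal a ≤ φ x)
    (k : ℝ)
    (ζ : Finset (EuclideanSpace ℝ (Fin d))) (hζ : ζ.card = Nat.floor k)
    (X : ℕ)
    (hind : ∀ t ⊆ ζ, (∀ x ∈ t, ∀ y ∈ t, x ≠ y → x - y ∉ S) → t.card ≤ X) :
    ENNReal.ofReal
        (a / 2 * ((Nat.floor k : ℝ) * ((Nat.floor k : ℝ) - (X : ℝ)) / X)) ≤
      (1 / 2 : ℝ≥0∞) * ∑ p ∈ ζ.offDiag, φ (p.1 - p.2) := by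
  set E := ζ.offDiag.filter fun p => p.1 - p.2 ∈ S
  have hturan : #ζ ^ 2 ≤ X * (#E + #ζ) :=
    sq_card_le_of_indep_card_le (fun x y h => by simpa using (hsym _).mp h) ζ X hind
  have hcount : (Nat.floor k : ℝ) * (Nat.floor k - X) / X ≤ #E := by
    rw [← hζ]
    refine div_le_of_le_mul₀ (Nat.cast_nonneg _) (Nat.cast_nonneg _) ?_
    have : (#ζ : ℝ) ^ 2 ≤ X * (#E + #ζ) := by exact_mod_cast hturan
    linarith
  have henergy : #E * ENNReal.ofReal a ≤ ∑ p ∈ ζ.offDiag, φ (p.1 - p.2) := by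
    rw [← nsmul_eq_mul]
    refine (card_nsmul_le_sum E _ _ fun p hp => ?_).trans (sum_le_sum_of_subset (filter_subset _ _))
    obtain ⟨hp, hS⟩ := mem_filter.mp hp
    exact hφS _ hS (sub_ne_zero.mpr (mem_offDiag.mp hp).2.2)
  calc ENNReal.ofReal (a / 2 * ((Nat.floor k : ℝ) * ((Nat.floor k : ℝ) - X) / X))
      ≤ ENNReal.ofReal (1 / 2 * (#E * a)) := by
        gcongr ENNReal.ofReal ?_
        linarith [mul_le_mul_of_nonneg_left hcount (half_pos ha).le]
    _ = (1 / 2 : ℝ≥0∞) * (#E * ENNReal.ofReal a) := by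
        rw [ENNReal.ofReal_mul (p := 1 / 2) (by norm_num), ENNReal.ofReal_mul (Nat.cast_nonneg _),
          ENNReal.ofReal_natCast, ENNReal.ofReal_div_of_pos two_pos]
        norm_num
    _ ≤ (1 / 2 : ℝ≥0∞) * ∑ p ∈ ζ.offDiag, φ (p.1 - p.2) := by gcongr

/-- Pair-energy lower bound: let `φ : ℝ^d → [0,∞]` with `φ ≥ a` on
`S ∖ {0}` (where `S` plays the role of `S_a = {φ ≥ a} ∪ {0}`, a symmetric
set), and let `ζ` be a configuration of `⌊k⌋` points such that every subset
of `ζ` with all pairwise differences outside `S` has at most `X` elements.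
Then `(1/2) Σ_{x≠y∈ζ} φ(x−y) ≥ (a/2)·⌊k⌋(⌊k⌋−X)/X`. -/
theorem pair_energy_lower_bound {d : ℕ}
    (φ : EuclideanSpace ℝ (Fin d) → ℝ≥0∞) (hφm : Measurable φ)
    (a : ℝ) (ha : 0 < a)
    (S : Set (EuclideanSpace ℝ (Fin d)))
    (h0 : (0 : EuclideanSpace ℝ (Fin d)) ∈ S)
    (hsym : ∀ x : EuclideanSpace ℝ (Fin d), x ∈ S ↔ -x ∈ S)
    (hφS : ∀ x ∈ S, x ≠ 0 → ENNReal.ofReal a ≤ φ x)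
    (k : ℝ) (hk : 0 < k)
    (ζ : Finset (EuclideanSpace ℝ (Fin d))) (hζ : ζ.card = Nat.floor k)
    (X : ℕ) (hX : 1 ≤ X)
    (hind : ∀ t ⊆ ζ, (∀ x ∈ t, ∀ y ∈ t, x ≠ y → x - y ∉ S) → t.card ≤ X) :
    ENNReal.ofReal
        (a / 2 * ((Nat.floor k : ℝ) * ((Nat.floor k : ℝ) - (X : ℝ)) / X)) ≤
      (1 / 2 : ℝ≥0∞) * ∑ p ∈ ζ.offDiag, φ (p.1 - p.2) :=
  pair_energy_lower_bound_general φ a ha S hsym hφS k ζ hζ X hind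

end
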